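/- If u is a smooth solution of i∂ₜu + (1/2)Δu = (ω²|x|²/2)u + λ|u|^{4/n}u on (-τ,τ) × ℝⁿ with 0 < ωτ < π/2, then v(t,x) = (1+(ωt)²)^{-n/4} e^{iω²t|x|²/(2(1+(ωt)²))} u(arctan(ωt)/ω, x/√(1+(ωt)²)) is a smooth solution of the critical NLS i∂ₜv + (1/2)Δv = λ|v|^{4/n}v on (-tan(ωτ)/ω, tan(ωτ)/ω) × ℝⁿ. -/

import Mathlib

/-- The Laplacian of a complex-valued function on `ℝⁿ`, as a sum of second partial
derivatives along the coordinate directions. -/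
noncomputable def laplacianC {n : ℕ} (f : EuclideanSpace ℝ (Fin n) → ℂ)
    (x : EuclideanSpace ℝ (Fin n)) : ℂ :=
  ∑ i : Fin n, fderiv ℝ (fun y => fderiv ℝ f y (EuclideanSpace.single i 1)) x
    (EuclideanSpace.single i 1)

/-!
Write `v t = A t • e^{i b(t) |x|² / 2} • u (σ t) (r t • x)` with `c = 1 + (ω t)²`, `A = c^{-n/4}`,
`b = ω² t / c`, `σ = arctan (ω t) / ω` and `r = c^{-1/2}`. These coefficients satisfy
`σ' = r²`, `r' = -b r`, `A' = -(n/2) b A` and `b' = ω² r⁴ - b²`. Computing `∂ₜ v` by the chain rule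
and `Δ v` by the product rule for the Gaussian chirp, and inserting the equation for `u` at
`(σ t, r t • x)`, every term but `r² λ |u|^{4/n} u` cancels; and `|v|^{4/n} = r² |u|^{4/n}`
because `A^{4/n} = c⁻¹ = r²`.
-/

open Real
open Complex (I ofRealCLM)

section Slices

variable {E G : Type*} [NormedAddCommGroup E] [NormedSpace ℝ E] [NormedAddCommGroup G]
  [NormedSpace ℝ G]

theorem hasDerivAt_comp_of_differentiableAt_uncurry {F : ℝ → E → G} {σ : ℝ → ℝ} {γ : ℝ → E}
    {σ' : ℝ} {γ' : E} {t : ℝ} (hF : DifferentiableAt ℝ (Function.uncurry F) (σ t, γ t))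
    (hσ : HasDerivAt σ σ' t) (hγ : HasDerivAt γ γ' t) :
    HasDerivAt (fun s => F (σ s) (γ s))
      (σ' • deriv (fun s => F s (γ t)) (σ t) + fderiv ℝ (F (σ t)) (γ t) γ') t := by
  set D := fderiv ℝ (Function.uncurry F) (σ t, γ t)
  have hline : HasDerivAt (fun s : ℝ => (s, γ t)) ((1 : ℝ), (0 : E)) (σ t) :=
    (hasDerivAt_id _).prodMk (hasDerivAt_const _ _)
  have htime : HasDerivAt (fun s => F s (γ t)) (D (1, 0)) (σ t) := by
    exact hF.hasFDerivAt.comp_hasDerivAt (σ t) hline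
  have hspace : HasFDerivAt (F (σ t)) (D.comp (ContinuousLinearMap.inr ℝ ℝ E)) (γ t) :=
    hF.hasFDerivAt.comp (γ t) (hasFDerivAt_prodMk_right _ _)
  have hsplit : D (σ', γ') = σ' • D (1, 0) + D (0, γ') := by
    rw [← map_smul, ← map_add]
    simp
  have hcurve : HasDerivAt (fun s => (σ s, γ s)) (σ', γ') t := hσ.prodMk hγ
  rw [htime.deriv, hspace.fderiv, ContinuousLinearMap.comp_apply, ContinuousLinearMap.inr_apply,
    ← hsplit]
  exact hF.hasFDerivAt.comp_hasDerivAt t hcurve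

theorem ContDiffOn.contDiff_apply_of_uncurry {F : ℝ → E → G} {s : Set ℝ} {k : WithTop ℕ∞}
    (hF : ContDiffOn ℝ k (Function.uncurry F) (s ×ˢ Set.univ)) {t : ℝ} (ht : t ∈ s) :
    ContDiff ℝ k (F t) := by
  rw [← contDiffOn_univ]
  exact hF.comp (contDiff_const.prodMk contDiff_id).contDiffOn fun _ _ => ⟨ht, trivial⟩

end Slices

section LensCoefficients

variable (ω : ℝ)

noncomputable def lensAmplitude (n : ℕ) (t : ℝ) : ℝ := (1 + (ω * t) ^ 2) ^ (-(n : ℝ) / 4)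

noncomputable def lensChirp (t : ℝ) : ℝ := ω ^ 2 * t / (1 + (ω * t) ^ 2)

noncomputable def lensTime (t : ℝ) : ℝ := arctan (ω * t) / ω

noncomputable def lensScale (t : ℝ) : ℝ := (√(1 + (ω * t) ^ 2))⁻¹

theorem lensScale_sq (t : ℝ) : lensScale ω t ^ 2 = (1 + (ω * t) ^ 2)⁻¹ := by
  rw [lensScale, inv_pow, sq_sqrt (by positivity)]

theorem hasDerivAt_one_add_mul_sq (t : ℝ) :
    HasDerivAt (fun s => 1 + (ω * s) ^ 2) (2 * ω ^ 2 * t) t := by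
  refine ((((hasDerivAt_id t).const_mul ω).pow 2).const_add 1).congr_deriv ?_
  simp only [id]
  ring

theorem hasDerivAt_lensAmplitude (n : ℕ) (t : ℝ) :
    HasDerivAt (lensAmplitude ω n) (-(n / 2) * lensChirp ω t * lensAmplitude ω n t) t := by
  have hc : 0 < 1 + (ω * t) ^ 2 := by positivity
  refine ((hasDerivAt_one_add_mul_sq ω t).rpow_const (p := -(n : ℝ) / 4)
    (Or.inl hc.ne')).congr_deriv ?_
  rw [lensChirp, lensAmplitude, rpow_sub_one hc.ne']
  field_simp
  ring

theorem hasDerivAt_lensChirp (t : ℝ) :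
    HasDerivAt (lensChirp ω) (ω ^ 2 * lensScale ω t ^ 4 - lensChirp ω t ^ 2) t := by
  have hc : 0 < 1 + (ω * t) ^ 2 := by positivity
  refine (((hasDerivAt_id t).const_mul (ω ^ 2)).div (hasDerivAt_one_add_mul_sq ω t)
    hc.ne').congr_deriv ?_
  rw [show lensScale ω t ^ 4 = (lensScale ω t ^ 2) ^ 2 by ring, lensScale_sq, lensChirp, id]
  field_simp
  ring

theorem hasDerivAt_lensTime {ω : ℝ} (hω : ω ≠ 0) (t : ℝ) :
    HasDerivAt (lensTime ω) (lensScale ω t ^ 2) t := by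
  refine (((hasDerivAt_arctan (ω * t)).comp t ((hasDerivAt_id t).const_mul ω)).div_const
    ω).congr_deriv ?_
  rw [lensScale_sq]
  field_simp

theorem hasDerivAt_lensScale (t : ℝ) :
    HasDerivAt (lensScale ω) (-(lensChirp ω t * lensScale ω t)) t := by
  have hc : 0 < 1 + (ω * t) ^ 2 := by positivity
  have hsqrt := (hasDerivAt_one_add_mul_sq ω t).sqrt hc.ne'
  refine (hsqrt.inv (by positivity)).congr_deriv ?_
  rw [lensChirp, lensScale, sq_sqrt hc.le]
  field_simp

theorem lensAmplitude_rpow {n : ℕ} (hn : n ≠ 0) (t : ℝ) :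
    lensAmplitude ω n t ^ ((4 : ℝ) / n) = lensScale ω t ^ 2 := by
  have hc : 0 < 1 + (ω * t) ^ 2 := by positivity
  rw [lensAmplitude, ← rpow_mul hc.le, lensScale_sq, ← rpow_neg_one]
  congr 1
  field_simp

theorem abs_lensTime_lt {ω τ t : ℝ} (hω : 0 < ω) (hτ : 0 < τ) (hτ' : τ < π / (2 * ω))
    (ht : |t| < tan (ω * τ) / ω) : |lensTime ω t| < τ := by
  have hωτ : ω * τ < π / 2 := by
    rw [lt_div_iff₀ (by positivity)] at hτ'
    linarith
  have harg : |ω * t| < tan (ω * τ) := by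
    rwa [abs_mul, abs_of_pos hω, ← lt_div_iff₀' hω]
  have harctan : |arctan (ω * t)| < ω * τ := by
    rw [← arctan_tan (by nlinarith) hωτ]
    rw [abs_lt] at harg ⊢
    rw [← arctan_neg]
    exact ⟨arctan_strictMono harg.1, arctan_strictMono harg.2⟩
  rw [lensTime, abs_div, abs_of_pos hω, div_lt_iff₀' hω]
  exact harctan

end LensCoefficients

section LensTransform

variable {n : ℕ}

local notation "E" => EuclideanSpace ℝ (Fin n)

noncomputable def partialC (i : Fin n) (f : E → ℂ) (x : E) : ℂ :=
  fderiv ℝ f x (EuclideanSpace.single i 1)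

theorem laplacianC_eq_sum_partialC (f : E → ℂ) (x : E) :
    laplacianC f x = ∑ i, partialC i (partialC i f) x :=
  rfl

theorem partialC_coord (i : Fin n) (x : E) : partialC i (fun y : E => (y i : ℂ)) x = 1 := by
  have h : HasFDerivAt (fun y : E => (y i : ℂ)) (ofRealCLM.comp (EuclideanSpace.proj i)) x :=
    ofRealCLM.hasFDerivAt.comp x (EuclideanSpace.proj (𝕜 := ℝ) i).hasFDerivAt
  simp [partialC, h.fderiv]

theorem partialC_add {f g : E → ℂ} {x : E} (hf : DifferentiableAt ℝ f x)
    (hg : DifferentiableAt ℝ g x) (i : Fin n) :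
    partialC i (fun y => f y + g y) x = partialC i f x + partialC i g x := by
  simp [partialC, fderiv_fun_add hf hg]

theorem partialC_mul {f g : E → ℂ} {x : E} (hf : DifferentiableAt ℝ f x)
    (hg : DifferentiableAt ℝ g x) (i : Fin n) :
    partialC i (fun y => f y * g y) x = partialC i f x * g x + f x * partialC i g x := by
  simp only [partialC, fderiv_fun_mul hf hg, add_apply,
    smul_apply, smul_eq_mul]
  ring

theorem partialC_const_mul {f : E → ℂ} {x : E} (hf : DifferentiableAt ℝ f x) (c : ℂ)
    (i : Fin n) : partialC i (fun y => c * f y) x = c * partialC i f x := by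
  simp [partialC, fderiv_const_mul hf]

theorem partialC_comp_smul {f : E → ℂ} {x : E} (r : ℝ) (hf : DifferentiableAt ℝ f (r • x))
    (i : Fin n) : partialC i (fun y => f (r • y)) x = r * partialC i f (r • x) := by
  have h : HasFDerivAt (fun y => f (r • y))
      ((fderiv ℝ f (r • x)).comp (r • ContinuousLinearMap.id ℝ E)) x :=
    hf.hasFDerivAt.comp x ((r • ContinuousLinearMap.id ℝ E).hasFDerivAt)
  simp [partialC, h.fderiv, Complex.real_smul]

theorem sum_coord_mul_partialC (f : E → ℂ) (x y : E) :
    ∑ i, (y i : ℂ) * partialC i f x = fderiv ℝ f x y := by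
  conv_rhs => rw [← (EuclideanSpace.basisFun (Fin n) ℝ).sum_repr y]
  simp [partialC, map_sum, Complex.real_smul]

theorem ContDiff.differentiable_partialC {f : E → ℂ} (hf : ContDiff ℝ 2 f) (i : Fin n) :
    Differentiable ℝ (partialC i f) :=
  ((hf.fderiv_right (m := 1) (by norm_num)).clm_apply contDiff_const).differentiable
    (by norm_num)

theorem laplacianC_mul {f g : E → ℂ} (hf : ContDiff ℝ 2 f) (hg : ContDiff ℝ 2 g) (x : E) :
    laplacianC (fun y => f y * g y) x
      = laplacianC f x * g x + 2 * ∑ i, partialC i f x * partialC i g x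
        + f x * laplacianC g x := by
  have hf1 := hf.differentiable (by norm_num)
  have hg1 := hg.differentiable (by norm_num)
  have hfi := hf.differentiable_partialC
  have hgi := hg.differentiable_partialC
  have hfirst : ∀ i, partialC i (fun y => f y * g y)
      = fun y => partialC i f y * g y + f y * partialC i g y :=
    fun i => funext fun y => partialC_mul (hf1 y) (hg1 y) i
  simp only [laplacianC_eq_sum_partialC, hfirst]
  rw [Finset.mul_sum, Finset.sum_mul, Finset.mul_sum, ← Finset.sum_add_distrib,
    ← Finset.sum_add_distrib]
  refine Finset.sum_congr rfl fun i _ => ?_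
  rw [partialC_add ((hfi i x).fun_mul (hg1 x)) ((hf1 x).fun_mul (hgi i x)),
    partialC_mul (hfi i x) (hg1 x), partialC_mul (hf1 x) (hgi i x)]
  ring

theorem laplacianC_const_mul {f : E → ℂ} (hf : ContDiff ℝ 2 f) (c : ℂ) (x : E) :
    laplacianC (fun y => c * f y) x = c * laplacianC f x := by
  have hf1 := hf.differentiable (by norm_num)
  have hfirst : ∀ i, partialC i (fun y => c * f y) = fun y => c * partialC i f y :=
    fun i => funext fun y => partialC_const_mul (hf1 y) c i
  simp only [laplacianC_eq_sum_partialC, hfirst, Finset.mul_sum,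
    partialC_const_mul (hf.differentiable_partialC _ x)]

theorem laplacianC_comp_smul {f : E → ℂ} (hf : ContDiff ℝ 2 f) (r : ℝ) (x : E) :
    laplacianC (fun y => f (r • y)) x = r ^ 2 * laplacianC f (r • x) := by
  have hf1 := hf.differentiable (by norm_num)
  have hfirst : ∀ i, partialC i (fun y => f (r • y)) = fun y => r * partialC i f (r • y) :=
    fun i => funext fun y => partialC_comp_smul r (hf1 _) i
  simp only [laplacianC_eq_sum_partialC, hfirst, Finset.mul_sum]
  refine Finset.sum_congr rfl fun i _ => ?_
  have hfi : DifferentiableAt ℝ (fun y => partialC i f (r • y)) x :=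
    (hf.differentiable_partialC i _).comp x ((differentiable_id.const_smul r) x)
  rw [partialC_const_mul hfi, partialC_comp_smul r (hf.differentiable_partialC i _)]
  ring

noncomputable def gaussPhase (b : ℝ) (y : E) : ℂ :=
  Complex.exp ((b / 2 * ‖y‖ ^ 2 : ℝ) * I)

theorem norm_gaussPhase (b : ℝ) (y : E) : ‖gaussPhase b y‖ = 1 :=
  Complex.norm_exp_ofReal_mul_I _

theorem contDiff_gaussPhase (b : ℝ) : ContDiff ℝ 2 (gaussPhase (n := n) b) := by
  have := (contDiff_norm_sq ℝ : ContDiff ℝ 2 fun y : E => ‖y‖ ^ 2)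
  exact ((ofRealCLM.contDiff.comp (contDiff_const.mul this)).mul contDiff_const).cexp

theorem hasFDerivAt_gaussPhase (b : ℝ) (y : E) :
    HasFDerivAt (gaussPhase b) ((I * b * gaussPhase b y) • ofRealCLM.comp (innerSL ℝ y)) y := by
  have hq := (hasStrictFDerivAt_norm_sq y).hasFDerivAt.const_mul (b / 2)
  have h := ((ofRealCLM.hasFDerivAt.comp y hq).mul_const I).cexp
  refine (h : HasFDerivAt (gaussPhase b) _ y).congr_fderiv ?_
  ext w
  simp only [Function.comp_apply, Complex.ofRealCLM_apply, Complex.ofReal_mul,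
    Complex.ofReal_div, Complex.ofReal_ofNat, Complex.ofReal_pow, ContinuousLinearMap.comp_smulₛₗ,
    map_div₀, ringHom_apply, ContinuousLinearMap.comp_smul, smul_apply,
    ContinuousLinearMap.comp_apply, coe_innerSL_apply, nsmul_eq_mul, Nat.cast_ofNat,
    Complex.real_smul, smul_eq_mul, gaussPhase]
  ring

theorem partialC_gaussPhase (b : ℝ) (i : Fin n) (y : E) :
    partialC i (gaussPhase b) y = I * b * y i * gaussPhase b y := by
  simp only [partialC, (hasFDerivAt_gaussPhase b y).fderiv, smul_apply,
    ContinuousLinearMap.comp_apply, coe_innerSL_apply, EuclideanSpace.inner_single_right,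
    ringHom_apply, one_mul, Complex.ofRealCLM_apply, smul_eq_mul]
  ring

theorem laplacianC_gaussPhase (b : ℝ) (y : E) :
    laplacianC (gaussPhase b) y = (I * b * n - b ^ 2 * ‖y‖ ^ 2) * gaussPhase b y := by
  have hP := (contDiff_gaussPhase (n := n) b).differentiable (by norm_num)
  have hc : ∀ i : Fin n, Differentiable ℝ (fun z : E => I * b * (z i : ℂ)) := by fun_prop
  have hfirst : ∀ i : Fin n,
      partialC i (gaussPhase b) = fun z => I * b * (z i : ℂ) * gaussPhase b z :=
    fun i => funext (partialC_gaussPhase b i)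
  simp only [laplacianC_eq_sum_partialC, hfirst]
  have hsecond : ∀ i : Fin n, partialC i (fun z => I * b * (z i : ℂ) * gaussPhase b z) y
      = (I * b - b ^ 2 * (y i) ^ 2) * gaussPhase b y := by
    intro i
    rw [partialC_mul (hc i y) (hP y), partialC_const_mul (by fun_prop), partialC_coord,
      partialC_gaussPhase]
    linear_combination (b * y i) ^ 2 * gaussPhase b y * Complex.I_sq
  have hnorm : ((‖y‖ : ℂ)) ^ 2 = ∑ i, ((y i : ℝ) : ℂ) ^ 2 := by
    exact_mod_cast EuclideanSpace.real_norm_sq_eq y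
  simp only [hsecond, ← Finset.sum_mul, Finset.sum_sub_distrib, ← Finset.mul_sum, hnorm]
  simp only [Finset.sum_const, Finset.card_univ, Fintype.card_fin, nsmul_eq_mul]
  ring

theorem laplacianC_gaussPhase_mul_comp_smul {f : E → ℂ} (hf : ContDiff ℝ 2 f) (b r : ℝ)
    (x : E) :
    laplacianC (fun y => gaussPhase b y * f (r • y)) x
      = gaussPhase b x * ((I * b * n - b ^ 2 * ‖x‖ ^ 2) * f (r • x)
        + 2 * I * b * r * fderiv ℝ f (r • x) x + r ^ 2 * laplacianC f (r • x)) := by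
  have hf1 := hf.differentiable (by norm_num)
  have hcross : ∑ i, partialC i (gaussPhase b) x * partialC i (fun y => f (r • y)) x
      = I * b * r * gaussPhase b x * fderiv ℝ f (r • x) x := by
    simp only [partialC_gaussPhase, partialC_comp_smul r (hf1 _), ← sum_coord_mul_partialC,
      Finset.mul_sum]
    exact Finset.sum_congr rfl fun i _ => by ring
  have hfr : ContDiff ℝ 2 fun y : E => f (r • y) := hf.comp (contDiff_const_smul r)
  rw [laplacianC_mul (contDiff_gaussPhase b) hfr, hcross,
    laplacianC_gaussPhase, laplacianC_comp_smul hf]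
  ring

theorem hasDerivAt_gaussPhase_param {β : ℝ → ℝ} {β' t : ℝ} (hβ : HasDerivAt β β' t) (y : E) :
    HasDerivAt (fun s => gaussPhase (β s) y) (I * β' * ‖y‖ ^ 2 / 2 * gaussPhase (β t) y) t := by
  have h := ((hβ.div_const 2).mul_const (‖y‖ ^ 2)).ofReal_comp.mul_const I |>.cexp
  refine h.congr_deriv ?_
  simp only [gaussPhase]
  push_cast
  ring

noncomputable def lensTransform (n : ℕ) (ω : ℝ) (u : ℝ → EuclideanSpace ℝ (Fin n) → ℂ)
    (t : ℝ) (x : EuclideanSpace ℝ (Fin n)) : ℂ :=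
  lensAmplitude ω n t * gaussPhase (lensChirp ω t) x * u (lensTime ω t) (lensScale ω t • x)

theorem gaussPhase_lensChirp (ω t : ℝ) (x : E) :
    gaussPhase (lensChirp ω t) x
      = Complex.exp (I * ω ^ 2 * t * ‖x‖ ^ 2 / (2 * (1 + (ω * t) ^ 2))) := by
  have hc : (1 : ℂ) + (ω * t) ^ 2 ≠ 0 := by
    exact_mod_cast (by positivity : (1 : ℝ) + (ω * t) ^ 2 ≠ 0)
  rw [gaussPhase, lensChirp]
  push_cast
  field_simp

theorem norm_lensTransform_rpow (hn : n ≠ 0) (ω : ℝ) (u : ℝ → E → ℂ) (t : ℝ) (x : E) :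
    ‖lensTransform n ω u t x‖ ^ ((4 : ℝ) / n)
      = lensScale ω t ^ 2 * ‖u (lensTime ω t) (lensScale ω t • x)‖ ^ ((4 : ℝ) / n) := by
  have hA : 0 ≤ lensAmplitude ω n t := by unfold lensAmplitude; positivity
  rw [lensTransform, norm_mul, norm_mul, norm_gaussPhase, mul_one, Complex.norm_real,
    Real.norm_of_nonneg hA, mul_rpow hA (norm_nonneg _), lensAmplitude_rpow ω hn]

theorem laplacianC_lensTransform {ω : ℝ} {u : ℝ → E → ℂ} {t : ℝ}
    (hu : ContDiff ℝ 2 (u (lensTime ω t))) (x : E) :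
    laplacianC (lensTransform n ω u t) x
      = lensAmplitude ω n t * gaussPhase (lensChirp ω t) x
        * ((I * lensChirp ω t * n - lensChirp ω t ^ 2 * ‖x‖ ^ 2)
            * u (lensTime ω t) (lensScale ω t • x)
          + 2 * I * lensChirp ω t * lensScale ω t
            * fderiv ℝ (u (lensTime ω t)) (lensScale ω t • x) x
          + lensScale ω t ^ 2 * laplacianC (u (lensTime ω t)) (lensScale ω t • x)) := by
  have hprod : lensTransform n ω u t = fun y => (lensAmplitude ω n t : ℂ)
      * (gaussPhase (lensChirp ω t) y * u (lensTime ω t) (lensScale ω t • y)) :=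
    funext fun y => mul_assoc _ _ _
  have hfr : ContDiff ℝ 2 fun y : E => u (lensTime ω t) (lensScale ω t • y) :=
    hu.comp (contDiff_const_smul _)
  rw [hprod, laplacianC_const_mul ((contDiff_gaussPhase _).mul hfr),
    laplacianC_gaussPhase_mul_comp_smul hu]
  ring

theorem hasDerivAt_lensTransform {ω : ℝ} (hω : ω ≠ 0) {u : ℝ → E → ℂ} {t : ℝ} {x : E}
    (hu : DifferentiableAt ℝ (Function.uncurry u) (lensTime ω t, lensScale ω t • x)) :
    HasDerivAt (fun s => lensTransform n ω u s x)
      (lensAmplitude ω n t * gaussPhase (lensChirp ω t) x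
        * ((-(n / 2) * lensChirp ω t
              + I * (ω ^ 2 * lensScale ω t ^ 4 - lensChirp ω t ^ 2) * ‖x‖ ^ 2 / 2)
            * u (lensTime ω t) (lensScale ω t • x)
          + lensScale ω t ^ 2 * deriv (fun s => u s (lensScale ω t • x)) (lensTime ω t)
          - lensChirp ω t * lensScale ω t
            * fderiv ℝ (u (lensTime ω t)) (lensScale ω t • x) x)) t := by
  have hA := (hasDerivAt_lensAmplitude ω n t).ofReal_comp
  have hP := hasDerivAt_gaussPhase_param (hasDerivAt_lensChirp ω t) x
  have hU := hasDerivAt_comp_of_differentiableAt_uncurry hu (hasDerivAt_lensTime hω t)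
    ((hasDerivAt_lensScale ω t).smul_const x)
  refine ((hA.mul hP).mul hU).congr_deriv ?_
  simp only [Pi.mul_apply, map_smul, Complex.real_smul]
  push_cast
  ring

end LensTransform

/-- The inverse lens transform maps solutions of the critical NLS with harmonic
potential to solutions of the critical NLS. -/
theorem inverse_lens_transform_of_harmonic_NLS
    (n : ℕ) (hn : 1 ≤ n) (ω lam τ : ℝ) (hω : 0 < ω) (hτ : 0 < τ) (hτ' : τ < Real.pi / (2 * ω))
    (u v : ℝ → EuclideanSpace ℝ (Fin n) → ℂ)
    (hureg : ContDiffOn ℝ 2 (fun p : ℝ × EuclideanSpace ℝ (Fin n) => u p.1 p.2)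
      (Set.Ioo (-τ) τ ×ˢ Set.univ))
    (hu : ∀ t x, |t| < τ →
      Complex.I * deriv (fun s => u s x) t + (1 / 2) * laplacianC (u t) x
        = ((ω : ℂ) ^ 2 * (‖x‖ : ℂ) ^ 2 / 2) * u t x
          + (lam : ℂ) * ((‖u t x‖ ^ ((4 : ℝ) / n) : ℝ) : ℂ) * u t x)
    (hv : ∀ t x, v t x = (((1 + (ω * t) ^ 2) ^ (-(n : ℝ) / 4) : ℝ) : ℂ)
        * Complex.exp (Complex.I * (ω : ℂ) ^ 2 * (t : ℂ) * (‖x‖ : ℂ) ^ 2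
            / (2 * (1 + ((ω : ℂ) * (t : ℂ)) ^ 2)))
        * u (Real.arctan (ω * t) / ω) ((Real.sqrt (1 + (ω * t) ^ 2))⁻¹ • x)) :
    ∀ t x, |t| < Real.tan (ω * τ) / ω →
      Complex.I * deriv (fun s => v s x) t + (1 / 2) * laplacianC (v t) x
        = (lam : ℂ) * ((‖v t x‖ ^ ((4 : ℝ) / n) : ℝ) : ℂ) * v t x := by
  intro t x ht
  have hσ := abs_lensTime_lt hω hτ hτ' ht
  have hσ_mem : lensTime ω t ∈ Set.Ioo (-τ) τ := abs_lt.mp hσ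
  have hdiff : DifferentiableAt ℝ (Function.uncurry u) (lensTime ω t, lensScale ω t • x) :=
    (hureg.differentiableOn (by norm_num)).differentiableAt
      ((isOpen_Ioo.prod isOpen_univ).mem_nhds ⟨hσ_mem, trivial⟩)
  have hnorm : ((‖lensScale ω t • x‖ : ℝ) : ℂ) ^ 2 = (lensScale ω t : ℂ) ^ 2 * (‖x‖ : ℂ) ^ 2 := by
    rw [norm_smul, Real.norm_eq_abs]
    push_cast
    rw [mul_pow, ← Complex.ofReal_pow, sq_abs, Complex.ofReal_pow]
  have hu_at := hu _ (lensScale ω t • x) hσ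
  rw [hnorm] at hu_at
  have hv' : v = lensTransform n ω u :=
    funext₂ fun s y => by rw [hv, ← gaussPhase_lensChirp]; rfl
  rw [hv', (hasDerivAt_lensTransform hω.ne' hdiff).deriv,
    laplacianC_lensTransform (hureg.contDiff_apply_of_uncurry hσ_mem),
    norm_lensTransform_rpow (by omega), lensTransform]
  push_cast at hu_at ⊢
  set A : ℂ := (lensAmplitude ω n t : ℂ)
  set P := gaussPhase (lensChirp ω t) x
  set U := u (lensTime ω t) (lensScale ω t • x)
  set b : ℂ := (lensChirp ω t : ℂ)
  set r : ℂ := (lensScale ω t : ℂ)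
  -- the `I ^ 2` term carries the `|x|²` terms, which cancel because `b' = ω² r⁴ - b²`
  linear_combination A * P * r ^ 2 * hu_at
    + A * P * (ω ^ 2 * r ^ 4 - b ^ 2) * ‖x‖ ^ 2 / 2 * U * Complex.I_sq
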